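/- arXiv:2605.21518 — 4 statements merged into one kernel-verified Lean document; each statement's English description precedes it below -/
import Mathlib

section
/- Let p_1 < p_2 < ... < p_k be distinct primes and m a positive integer such that 1/p_1 + ... + 1/p_k = 1 - 1/m. Then m = p_1 * p_2 * ... * p_k. -/
/-!
Put `P = ∏ pᵢ` and `S = ∑ᵢ P / pᵢ`. Clearing denominators turns the equation into
`m * (P - S) = P`, so `P - S` divides `P`. Modulo `pᵢ` we have `P - S ≡ -P / pᵢ ≢ 0`, because the
primes are distinct; hence `P - S` is coprime to `P`, so `P - S = 1` and `m = P`.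
-/

open Finset

section

variable {ι : Type*} [Fintype ι] [DecidableEq ι]

theorem sum_one_div_eq_sum_prod_erase_div {K : Type*} [Field K] {a : ι → K} (ha : ∀ i, a i ≠ 0) :
    ∑ i, 1 / a i = (∑ i, ∏ j ∈ univ.erase i, a j) / ∏ i, a i := by
  rw [sum_div]
  refine sum_congr rfl fun i _ => ?_
  rw [div_eq_div_iff (ha i) (prod_ne_zero_iff.2 fun j _ => ha j), one_mul,
    prod_erase_mul _ _ (mem_univ i)]

variable {p : ι → ℕ} (hp : ∀ i, (p i).Prime) (hinj : Function.Injective p)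
include hp hinj

theorem prime_not_dvd_prod_erase (i : ι) : ¬ p i ∣ ∏ j ∈ univ.erase i, p j := by
  rw [← (hp i).coprime_iff_not_dvd]
  exact Nat.Coprime.prod_right fun j hj =>
    (Nat.coprime_primes (hp i) (hp j)).2 fun hij => (mem_erase.1 hj).1 (hinj hij).symm

theorem prime_not_dvd_sum_prod_erase (i : ι) :
    ¬ p i ∣ ∑ j, ∏ l ∈ univ.erase j, p l := by
  have hrest : p i ∣ ∑ j ∈ univ.erase i, ∏ l ∈ univ.erase j, p l :=
    dvd_sum fun j hj => dvd_prod_of_mem p (mem_erase.2 ⟨(mem_erase.1 hj).1.symm, mem_univ i⟩)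
  rw [← add_sum_erase univ (fun j => ∏ l ∈ univ.erase j, p l) (mem_univ i), Nat.dvd_add_left hrest]
  exact prime_not_dvd_prod_erase hp hinj i

end

theorem erdos_equation_m_eq_prod (k : ℕ) (p : Fin k → ℕ)
    (hp : ∀ i, (p i).Prime) (hinj : Function.Injective p)
    (m : ℕ) (hm : 0 < m)
    (h : ∑ i, (1 : ℚ) / p i = 1 - 1 / m) :
    m = ∏ i, p i := by
  set P := ∏ i, p i
  set S := ∑ i, ∏ j ∈ univ.erase i, p j
  have hP : 0 < P := prod_pos fun i _ => (hp i).pos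
  have hcleared : m * S + P = m * P := by
    have hsum : ∑ i, (1 : ℚ) / p i = S / P := by
      rw [sum_one_div_eq_sum_prod_erase_div fun i => by exact_mod_cast (hp i).ne_zero]
      simp only [S, P, Nat.cast_sum, Nat.cast_prod]
    rw [hsum] at h
    field_simp at h
    exact_mod_cast (by linear_combination h : (m * S + P : ℚ) = m * P)
  have hSP : S < P := Nat.lt_of_mul_lt_mul_left (a := m) (by omega)
  have hmD : m * (P - S) = P := by rw [Nat.mul_sub]; omega
  have hcop : Nat.Coprime (P - S) P := Nat.Coprime.prod_right fun i _ => by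
    refine ((hp i).coprime_iff_not_dvd.2 fun hdvd => ?_).symm
    refine prime_not_dvd_sum_prod_erase hp hinj i ?_
    have := Nat.dvd_sub (dvd_prod_of_mem p (mem_univ i) : p i ∣ P) hdvd
    rwa [Nat.sub_sub_self hSP.le] at this
  have hD : P - S = 1 := hcop.eq_one_of_dvd (Dvd.intro_left m hmD)
  simpa [hD] using hmD
end

section
/- Let K be a squarefree integer with ∂(K) = K - 1, and let C be a squarefree integer coprime to K. Then ∂(KC) = KC - 1 if and only if C - K·∂(C) = 1. -/
/-- Arithmetic derivative on squarefree integers: ∂(n) = ∑_{p ∣ n prime} n/p. -/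
def ad (n : ℕ) : ℕ := ∑ p ∈ n.primeFactors, n / p

lemma ad_mul_coprime (K C : ℕ) (hcop : Nat.Coprime K C) :
    ad (K * C) = C * ad K + K * ad C := by
  unfold ad
  rw [Nat.Coprime.primeFactors_mul hcop,
    Finset.sum_union (Nat.Coprime.disjoint_primeFactors hcop), Finset.mul_sum, Finset.mul_sum]
  congr 1
  · apply Finset.sum_congr rfl
    intro p hp
    rw [Nat.mul_comm K C, Nat.mul_div_assoc C (Nat.dvd_of_mem_primeFactors hp)]
  · exact Finset.sum_congr rfl fun p hp =>
      Nat.mul_div_assoc K (Nat.dvd_of_mem_primeFactors hp)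

theorem inheritance_equation (K C : ℕ) (hK : Squarefree K)
    (hKppn : (ad K : ℤ) = K - 1) (hC : Squarefree C) (hcop : Nat.Coprime K C) :
    (ad (K * C) : ℤ) = K * C - 1 ↔ (C : ℤ) - K * ad C = 1 := by
  rw [ad_mul_coprime K C hcop]
  push_cast
  rw [hKppn]
  constructor <;> intro h <;> linear_combination -h
end

section
/- If K is a squarefree integer with ∂(K) = K - 1 and K + 1 is prime, then K(K+1) satisfies ∂(K(K+1)) = K(K+1) - 1. -/
theorem one_prime_inheritance (K : ℕ) (hK : Squarefree K)
    (hKppn : (ad K : ℤ) = K - 1) (hp : (K + 1).Prime) :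
    (ad (K * (K + 1)) : ℤ) = K * (K + 1) - 1 := by
  have hK0 : K ≠ 0 := hK.ne_zero
  have hK10 : K + 1 ≠ 0 := by omega
  have hdisj : Disjoint K.primeFactors (K + 1).primeFactors := by
    rw [hp.primeFactors]
    simp only [Finset.disjoint_singleton_right, Nat.mem_primeFactors]
    rintro ⟨-, hdvd, -⟩
    exact absurd (Nat.le_of_dvd (Nat.pos_of_ne_zero hK0) hdvd) (by omega)
  have key : ad (K * (K + 1)) = (K + 1) * ad K + K := by
    unfold ad
    rw [Nat.primeFactors_mul hK0 hK10, Finset.sum_union hdisj, hp.primeFactors,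
      Finset.sum_singleton, Nat.mul_div_cancel _ (Nat.pos_of_ne_zero hK10),
      Finset.mul_sum]
    congr 1
    refine Finset.sum_congr rfl fun p hpmem => ?_
    have hpd : p ∣ K := (Nat.mem_primeFactors.mp hpmem).2.1
    rw [mul_comm K (K + 1), Nat.mul_div_assoc _ hpd]
  rw [key]
  push_cast
  rw [show ((ad K : ℤ)) = (K : ℤ) - 1 from hKppn]
  ring
end

section
/- Let K be a squarefree integer with ∂(K) = K - 1, and let p < q be two primes not dividing K. Then ∂(Kpq) = Kpq - 1 if and only if (p - K)(q - K) = K² + 1. -/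
theorem two_prime_inheritance (K p q : ℕ) (hK : Squarefree K)
    (hKppn : (ad K : ℤ) = K - 1) (hp : p.Prime) (hq : q.Prime) (hpq : p < q)
    (hpK : ¬ p ∣ K) (hqK : ¬ q ∣ K) :
    (ad (K * p * q) : ℤ) = K * p * q - 1 ↔
      ((p : ℤ) - K) * ((q : ℤ) - K) = (K : ℤ) ^ 2 + 1 := by
  have hK0 : K ≠ 0 := hK.ne_zero
  have hpq' : p ≠ q := hpq.ne
  have hpf : (K * p * q).primeFactors = insert p (insert q K.primeFactors) := by
    rw [Nat.primeFactors_mul (mul_ne_zero hK0 hp.ne_zero) hq.ne_zero,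
      Nat.primeFactors_mul hK0 hp.ne_zero, hp.primeFactors, hq.primeFactors]
    ext r
    simp only [Finset.mem_union, Finset.mem_singleton, Finset.mem_insert]
    tauto
  have hpne : p ∉ insert q K.primeFactors := by
    simp only [Finset.mem_insert, Nat.mem_primeFactors]
    push_neg
    exact ⟨hpq', fun _ h => (hpK h).elim⟩
  have hqne : q ∉ K.primeFactors := by
    simp only [Nat.mem_primeFactors]
    push_neg
    exact fun _ h => (hqK h).elim
  have key : ad (K * p * q) = K * q + (K * p + ad K * (p * q)) := by
    rw [ad, hpf, Finset.sum_insert hpne, Finset.sum_insert hqne]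
    have h1 : K * p * q / p = K * q := by
      rw [mul_right_comm, Nat.mul_div_cancel _ hp.pos]
    have h2 : K * p * q / q = K * p := by
      rw [Nat.mul_div_cancel _ hq.pos]
    rw [h1, h2, ad, Finset.sum_mul]
    congr 2
    refine Finset.sum_congr rfl fun r hr => ?_
    obtain ⟨m, rfl⟩ := Nat.dvd_of_mem_primeFactors hr
    have hr0 : 0 < r := (Nat.prime_of_mem_primeFactors hr).pos
    rw [mul_assoc, mul_assoc, Nat.mul_div_cancel_left _ hr0,
      Nat.mul_div_cancel_left _ hr0]
  have : (ad (K * p * q) : ℤ) = K * q + (K * p + (K - 1) * (p * q)) := by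
    rw [key]; push_cast; rw [hKppn]
  rw [this]
  constructor <;> intro h <;> linear_combination -h
end
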